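/- arXiv:1304.7373 — 4 statements merged into one kernel-verified Lean document; each statement's English description precedes it below -/
import Mathlib

section
/- Under the assumptions R(d) < ε·P(0) and R(d)/|R'(d)| < ε·s* with 0 < ε < 1/2, d = (1-ε)s*, e = C/R(d), f = C/(P(0)·a_max), k = -R'(d)/(f·R(d)), L_i = e - f·a_i, the quantity l_i := d·L_i - a_i/k is strictly positive for every i (where 0 < a_i ≤ a_max). -/
theorem stmt_5 (P R : ℝ → ℝ) (sstar ε C amax d e f k : ℝ) (n : ℕ)
    (a L l : Fin n → ℝ)
    (hconv : StrictConvexOn ℝ Set.univ P) (hP0 : 0 < P 0)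
    (hs : 0 < sstar) (hC : 0 < C) (hε1 : 0 < ε) (hε2 : ε < 1/2)
    (hRdef : ∀ s, R s = P s - (P sstar / sstar) * s)
    (hd : d = (1 - ε) * sstar)
    (hRd : 0 < R d) (hR'd : deriv R d < 0)
    (hRdε : R d < ε * P 0)
    (hratio : R d / |deriv R d| < ε * sstar)
    (he : e = C / R d) (hf : f = C / (P 0 * amax))
    (hk : k = -deriv R d / (f * R d))
    (ha : ∀ i, 0 < a i ∧ a i ≤ amax)
    (hL : ∀ i, L i = e - f * a i) (hLpos : ∀ i, 0 < L i)
    (hl : ∀ i, l i = d * L i - a i / k) :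
    ∀ i, 0 < l i := by
  intro i
  obtain ⟨hA, hAM⟩ := ha i
  have hM : 0 < amax := lt_of_lt_of_le hA hAM
  have hR' : 0 < -deriv R d := by linarith
  rw [abs_of_neg hR'd] at hratio
  have hratio' : R d < ε * sstar * (-deriv R d) := (div_lt_iff₀ hR').mp hratio
  have hfpos : 0 < f := by rw [hf]; positivity
  have hkpos : 0 < k := by rw [hk]; positivity
  set x := R d with hx
  set y := -deriv R d with hy
  set p := P 0 with hp
  have key : a i / k < d * (e - f * a i) := by
    rw [div_lt_iff₀ hkpos, hk, he, hf]
    have hdpos : 0 < d := by rw [hd]; nlinarith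
    have hne : (p * amax) ≠ 0 := by positivity
    have hxne : x ≠ 0 := ne_of_gt hRd
    have hRHS : d * (C / x - C / (p * amax) * a i) * (y / (C / (p * amax) * x))
        = d * y * (p * amax - x * a i) / (x * x) := by
      field_simp
    rw [hRHS, lt_div_iff₀ (by positivity : (0:ℝ) < x * x)]
    have h5 : x * a i ≤ x * amax := mul_le_mul_of_nonneg_left hAM hRd.le
    have h6 : amax * ((1 - ε) * p) < p * amax - x * a i := by nlinarith
    have h7 : d * y * (amax * ((1 - ε) * p)) < d * y * (p * amax - x * a i) :=
      mul_lt_mul_of_pos_left h6 (mul_pos hdpos hR')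
    have h8 : a i * (x * x) ≤ amax * (x * x) :=
      mul_le_mul_of_nonneg_right hAM (mul_pos hRd hRd).le
    have h9 : x * x < ε * sstar * y * (ε * p) :=
      mul_lt_mul'' hratio' hRdε hRd.le hRd.le
    have h10 : amax * (x * x) < amax * (ε * sstar * y * (ε * p)) :=
      mul_lt_mul_of_pos_left h9 hM
    have h11 : amax * (ε * sstar * y * (ε * p)) ≤ d * y * (amax * ((1 - ε) * p)) := by
      rw [hd]
      nlinarith [mul_pos (mul_pos hs hR') (mul_pos hM hP0)]
    linarith
  rw [hl i, hL i]
  linarith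
end

section
/- Under the setup where the secant slope (H_i(l_i + a_i/k) - F(l_i))/(a_i/k) equals H_i'(l_i + a_i/k) and H_i is strictly convex, H_i(l_i) > F(l_i) (i.e., G(l_i) > 0); combined with l_i < L_i·s* and the zero structure of G = H_i - F, this gives 0 < l_i < r_{i1}, where r_{i1} is the smaller of the two roots of H_i(x) = F(x). -/
theorem stmt_14 (H F : ℝ → ℝ) (m C sstar L d l c r1 r2 : ℝ)
    (hH : StrictConvexOn ℝ Set.univ H) (hHd : Differentiable ℝ H)
    (hF : ∀ x, F x = m * x + C)
    (hc : 0 < c) (hl : 0 < l)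
    (hsum : l + c = d * L) (hdL : d * L < L * sstar)
    (hsecant : deriv H (l + c) = (H (l + c) - F l) / c)
    (hr : r1 < r2) (hr1 : r1 < L * sstar) (hr2 : L * sstar < r2)
    (hroot1 : H r1 = F r1) (hroot2 : H r2 = F r2)
    (hpos : ∀ x, 0 ≤ x → x < r1 → F x < H x)
    (hneg : ∀ x, r1 < x → x < r2 → H x < F x) :
    0 < l ∧ l < r1 := by
  have hslope := hH.slope_lt_deriv (Set.mem_univ l) (Set.mem_univ (l + c))
    (by linarith) (hHd (l + c))
  rw [slope_def_field, hsecant] at hslope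
  have hcc : l + c - l = c := by ring
  rw [hcc] at hslope
  have hFl : F l < H l := by
    have := (div_lt_div_iff_of_pos_right hc).mp hslope
    linarith
  refine ⟨hl, ?_⟩
  by_contra h
  push_neg at h
  rcases eq_or_lt_of_le h with he | hlt
  · rw [← he, hroot1] at hFl; linarith
  · have : H l < F l := hneg l hlt (by linarith)
    linarith
end

section
/- Under the setup of the reduction, r_{i1} < l_i + a_i/k < r_{i2}. Specifically: if l_i + a_i/k ≤ r_{i1} then the secant slope from (l_i, F(l_i)) to (l_i + a_i/k, H_i(l_i + a_i/k)) would be at least P(s*)/s*, forcing P'(d) ≥ P(s*)/s*, contradicting P'(d) < P(s*)/s* for d < s*; and l_i + a_i/k = d·L_i < L_i·s* ≤ r_{i2}. -/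
theorem stmt_16 (P F H : ℝ → ℝ) (sstar L C d l a k r1 r2 : ℝ)
    (hP : Differentiable ℝ P) (hconv : StrictConvexOn ℝ Set.univ P)
    (hs : 0 < sstar) (hL : 0 < L) (hC : 0 < C)
    (hcrit : deriv P sstar = P sstar / sstar)
    (hd0 : 0 < d) (hds : d < sstar)
    (hF : ∀ x, F x = (P sstar / sstar) * x + C)
    (hH : ∀ x, H x = P (x / L) * L)
    (hk : 0 < k) (ha : 0 < a)
    (hsum : l + a / k = d * L) (hl : 0 < l)
    (hr : r1 < r2) (hroot1 : F r1 = H r1) (hroot2 : F r2 = H r2)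
    (hr1 : r1 < L * sstar) (hr2 : L * sstar < r2)
    (hge : ∀ x, 0 ≤ x → x ≤ r1 → F x ≤ H x)
    (hl1 : l < r1)
    (hslope : (H (l + a / k) - F l) / (a / k) = deriv P d)
    (hPd : deriv P d < P sstar / sstar) :
    r1 < l + a / k ∧ l + a / k < r2 := by
  have hak : 0 < a / k := div_pos ha hk
  constructor
  · by_contra h
    push_neg at h
    have hge' := hge (l + a / k) (by linarith) h
    rw [hF (l + a / k)] at hge'
    have hs' : P sstar / sstar ≤ (H (l + a / k) - F l) / (a / k) := by
      rw [le_div_iff₀ hak, hF l]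
      nlinarith [hge']
    rw [hslope] at hs'
    linarith
  · have : l + a / k < L * sstar := by nlinarith
    linarith
end

section
/- Let LE(x) = min(F(x), H(x)) where F(x) = (P(s*)/s*)x + C is affine and H is strictly convex, F and H crossing at r₁ < r₂ with H > F outside [r₁, r₂] and H < F inside, and let l < r₁. Suppose the slope function slope(x) = (LE(x) - F(l))/(x - l) for x > l attains its minimum value P'(d) at x = l + a/k (with H'(l + a/k) = P'(d) = slope(l + a/k)). Then for every x > l with x ≠ l + a/k, LE(x) > F(l) + P'(d)·(x - l). -/
theorem stmt_19 (F H LE : ℝ → ℝ) (m C Pd l c r1 r2 : ℝ)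
    (hF : ∀ x, F x = m * x + C)
    (hH : StrictConvexOn ℝ Set.univ H) (hHd : Differentiable ℝ H)
    (hr : r1 < r2)
    (hout : ∀ x, x < r1 ∨ r2 < x → F x < H x)
    (hin : ∀ x, r1 < x → x < r2 → H x < F x)
    (hroot1 : F r1 = H r1) (hroot2 : F r2 = H r2)
    (hl : l < r1) (hc : 0 < c)
    (hx0 : r1 < l + c) (hx0' : l + c < r2)
    (hLE : ∀ x, LE x = min (F x) (H x))
    (hderiv : deriv H (l + c) = Pd)
    (hsec : (H (l + c) - F l) / c = Pd)
    (hPdm : Pd < m)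
    (hmin : ∀ x, l < x → Pd ≤ (LE x - F l) / (x - l)) :
    ∀ x, l < x → x ≠ l + c → F l + Pd * (x - l) < LE x := by
  intro x hx hne
  have hHlc : H (l + c) = F l + Pd * c := by
    field_simp at hsec; linarith
  have hFx : F l + Pd * (x - l) < F x := by
    rw [hF x, hF l]; nlinarith
  have hHx : F l + Pd * (x - l) < H x := by
    rcases lt_or_gt_of_ne hne with h | h
    · have := hH.slope_lt_deriv (Set.mem_univ x) (Set.mem_univ (l + c)) h
        (hHd (l + c))
      rw [hderiv, slope_def_field, div_lt_iff₀ (by linarith)] at this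
      nlinarith
    · have := hH.deriv_lt_slope (Set.mem_univ (l + c)) (Set.mem_univ x) h
        (hHd (l + c))
      rw [hderiv, slope_def_field, lt_div_iff₀ (by linarith)] at this
      nlinarith
  rw [hLE]
  exact lt_min hFx hHx
end
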